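/- Let η, H > 0, N ≥ 1, T ≥ 1, losses l_t ∈ [0,H]^N, delays D(t) with t + D(t) ≤ T, and 𝒟_t = {τ : τ + D(τ) ≤ t}. The delayed Hedge algorithm with uniform prior and weights w_t(n) ∝ e^{-η Σ_{τ∈𝒟_{t-1}} l_τ(n)} satisfies, for every expert n: Σ_{t=1}^T ⟨w_t, l_t⟩ - Σ_{t=1}^T l_t(n) ≤ (ln N)/η + η H² T/8 + (η H²/4)·Σ_{t=1}^T D(t). -/

import Mathlib

/-!
Write `Φ(L) = log ∑ᵢ exp (-Lᵢ)` and `p(L) ∝ exp (-L)` for the Gibbs weights, so that Hedge plays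
`p(η L)` with `L` the cumulative loss. Without delays, Hoeffding's lemma gives
`⟨p(L), δ⟩ ≤ (Φ(L) - Φ(L + η δ)) / η + η H² / 8` for every loss vector `δ ∈ [0, H]ᴺ`, and these
bounds telescope over the rounds. Delays enter only through the losses still pending at round `t`:
adding one loss `δ ∈ [0, H]ᴺ` to the exponent moves the Gibbs mean of any `x ∈ [0, H]ᴺ` by at most
`η H² / 4`, because along `s ↦ L + s δ` the derivative of that mean is minus a covariance under the
Gibbs weights, which Cauchy–Schwarz and Popoviciu's inequality bound by `H² / 4`. Finally, loss `τ`
is pending during at most `D τ` rounds.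
-/

open Finset Real

variable {ι : Type*}

lemma hasDerivAt_exp_neg_add_smul (L δ : ι → ℝ) (i : ι) (s : ℝ) :
    HasDerivAt (fun s : ℝ => exp (-(L + s • δ) i)) (-(exp (-(L + s • δ) i) * δ i)) s := by
  have h := (((hasDerivAt_id s).mul_const (δ i)).const_add (L i)).fun_neg.exp
  simp only [Pi.add_apply, Pi.smul_apply, smul_eq_mul, id] at h ⊢
  convert h using 1
  ring

variable [Fintype ι]

noncomputable def weightedCov (p x y : ι → ℝ) : ℝ :=
  ∑ i, p i * (x i * y i) - (∑ i, p i * x i) * ∑ i, p i * y i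

lemma weightedCov_eq_sum_mul_sub_mul_sub {p : ι → ℝ} (hp : ∑ i, p i = 1) (x y : ι → ℝ) :
    weightedCov p x y
      = ∑ i, p i * ((x i - ∑ j, p j * x j) * (y i - ∑ j, p j * y j)) := by
  set mx := ∑ j, p j * x j
  set my := ∑ j, p j * y j
  have expand : ∀ i, p i * ((x i - mx) * (y i - my))
      = p i * (x i * y i) - p i * x i * my - mx * (p i * y i) + mx * my * p i := fun i => by ring
  simp only [weightedCov, expand, sum_add_distrib, sum_sub_distrib, ← sum_mul, ← mul_sum, hp]
  ring

lemma weightedCov_self_nonneg {p : ι → ℝ} (hp₀ : ∀ i, 0 ≤ p i) (hp : ∑ i, p i = 1)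
    (x : ι → ℝ) : 0 ≤ weightedCov p x x := by
  rw [weightedCov_eq_sum_mul_sub_mul_sub hp]
  exact sum_nonneg fun i _ => mul_nonneg (hp₀ i) (mul_self_nonneg _)

lemma weightedCov_self_le {p x : ι → ℝ} {H : ℝ} (hp₀ : ∀ i, 0 ≤ p i)
    (hx : ∀ i, x i ∈ Set.Icc 0 H) : weightedCov p x x ≤ H ^ 2 / 4 := by
  set m := ∑ i, p i * x i
  have hsq : ∑ i, p i * (x i * x i) ≤ H * m := by
    rw [mul_sum]
    refine sum_le_sum fun i _ => ?_
    nlinarith [mul_nonneg (hp₀ i) (mul_nonneg (hx i).1 (sub_nonneg.2 (hx i).2))]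
  have : weightedCov p x x ≤ H * m - m * m := by unfold weightedCov; linarith
  nlinarith [sq_nonneg (H - 2 * m)]

lemma abs_weightedCov_le {p x y : ι → ℝ} {H : ℝ} (hp₀ : ∀ i, 0 ≤ p i) (hp : ∑ i, p i = 1)
    (hx : ∀ i, x i ∈ Set.Icc 0 H) (hy : ∀ i, y i ∈ Set.Icc 0 H) :
    |weightedCov p x y| ≤ H ^ 2 / 4 := by
  have cauchySchwarz : weightedCov p x y ^ 2 ≤ weightedCov p x x * weightedCov p y y := by
    simp only [weightedCov_eq_sum_mul_sub_mul_sub hp]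
    exact sum_sq_le_sum_mul_sum_of_sq_le_mul _
      (fun i _ => mul_nonneg (hp₀ i) (mul_self_nonneg _))
      (fun i _ => mul_nonneg (hp₀ i) (mul_self_nonneg _)) (fun i _ => le_of_eq (by ring))
  have hvx := weightedCov_self_le hp₀ hx
  have hvy := weightedCov_self_le hp₀ hy
  refine abs_le_of_sq_le_sq ?_ (by positivity)
  calc weightedCov p x y ^ 2 ≤ weightedCov p x x * weightedCov p y y := cauchySchwarz
    _ ≤ (H ^ 2 / 4) ^ 2 := by
      rw [sq]
      exact mul_le_mul hvx hvy (weightedCov_self_nonneg hp₀ hp y) (by positivity)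

noncomputable def gibbs (L : ι → ℝ) (i : ι) : ℝ := exp (-L i) / ∑ j, exp (-L j)

noncomputable def logPartition (L : ι → ℝ) : ℝ := log (∑ i, exp (-L i))

lemma gibbs_nonneg (L : ι → ℝ) (i : ι) : 0 ≤ gibbs L i := by
  unfold gibbs; positivity

lemma sum_exp_neg_pos [Nonempty ι] (L : ι → ℝ) : 0 < ∑ i, exp (-L i) :=
  sum_pos (fun _ _ => exp_pos _) univ_nonempty

lemma sum_gibbs [Nonempty ι] (L : ι → ℝ) : ∑ i, gibbs L i = 1 := by
  simp only [gibbs, ← sum_div]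
  exact div_self (sum_exp_neg_pos L).ne'

lemma sum_gibbs_mul (L x : ι → ℝ) :
    ∑ i, gibbs L i * x i = (∑ i, exp (-L i) * x i) / ∑ i, exp (-L i) := by
  simp only [gibbs, div_mul_eq_mul_div, ← sum_div]

lemma hasDerivAt_logPartition_add_smul [Nonempty ι] (L δ : ι → ℝ) (s : ℝ) :
    HasDerivAt (fun s : ℝ => logPartition (L + s • δ)) (-∑ i, gibbs (L + s • δ) i * δ i) s := by
  unfold logPartition
  have hZ := HasDerivAt.fun_sum fun i (_ : i ∈ univ) => hasDerivAt_exp_neg_add_smul L δ i s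
  convert hZ.log (sum_exp_neg_pos _).ne' using 1
  rw [sum_gibbs_mul, sum_neg_distrib, neg_div]

lemma hasDerivAt_sum_gibbs_add_smul_mul [Nonempty ι] (L δ x : ι → ℝ) (s : ℝ) :
    HasDerivAt (fun s : ℝ => ∑ i, gibbs (L + s • δ) i * x i)
      (-weightedCov (gibbs (L + s • δ)) x δ) s := by
  have hZ := HasDerivAt.fun_sum fun i (_ : i ∈ univ) => hasDerivAt_exp_neg_add_smul L δ i s
  have hA := HasDerivAt.fun_sum fun i (_ : i ∈ univ) =>
    (hasDerivAt_exp_neg_add_smul L δ i s).mul_const (x i)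
  simp only [sum_gibbs_mul]
  refine (hA.fun_div hZ (sum_exp_neg_pos _).ne').congr_deriv ?_
  have hxδ : ∑ i, -(exp (-(L + s • δ) i) * δ i) * x i
      = -∑ i, exp (-(L + s • δ) i) * (x i * δ i) := by
    rw [← sum_neg_distrib]; exact sum_congr rfl fun i _ => by ring
  have hZ0 := (sum_exp_neg_pos (L + s • δ)).ne'
  simp only [weightedCov, sum_gibbs_mul, hxδ, sum_neg_distrib]
  field_simp
  ring

lemma abs_sum_gibbs_add_smul_mul_sub_le [Nonempty ι] {δ x : ι → ℝ} {H s : ℝ}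
    (hδ : ∀ i, δ i ∈ Set.Icc 0 H) (hx : ∀ i, x i ∈ Set.Icc 0 H) (hs : 0 ≤ s) (L : ι → ℝ) :
    |∑ i, gibbs (L + s • δ) i * x i - ∑ i, gibbs L i * x i| ≤ s * (H ^ 2 / 4) := by
  have hderiv_le : ∀ r : ℝ, ‖-weightedCov (gibbs (L + r • δ)) x δ‖ ≤ H ^ 2 / 4 := fun r => by
    rw [norm_neg, Real.norm_eq_abs]
    exact abs_weightedCov_le (gibbs_nonneg _) (sum_gibbs _) hx hδ
  have h := norm_image_sub_le_of_norm_deriv_le_segment'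
    (fun r _ => (hasDerivAt_sum_gibbs_add_smul_mul L δ x r).hasDerivWithinAt)
    (fun r _ => hderiv_le r) s (Set.right_mem_Icc.2 hs)
  simpa [Real.norm_eq_abs, mul_comm] using h

lemma logPartition_add_smul_le [Nonempty ι] {δ : ι → ℝ} {H η : ℝ}
    (hδ : ∀ i, δ i ∈ Set.Icc 0 H) (hη : 0 ≤ η) (L : ι → ℝ) :
    logPartition (L + η • δ) ≤ logPartition L - η * ∑ i, gibbs L i * δ i + η ^ 2 * H ^ 2 / 8 := by
  -- `g` is antitone: `g' s = m - ⟨p(L + s δ), δ⟩ - s H² / 4 ≤ 0` by the drift bound at `x = δ`.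
  set m := ∑ i, gibbs L i * δ i
  set g : ℝ → ℝ := fun s => logPartition (L + s • δ) + s * m - s ^ 2 * H ^ 2 / 8
  have hg : ∀ s, HasDerivAt g (-∑ i, gibbs (L + s • δ) i * δ i + m - s * H ^ 2 / 4) s :=
    fun s => by
    refine (((hasDerivAt_logPartition_add_smul L δ s).fun_add
      ((hasDerivAt_id s).mul_const m)).fun_sub
      (((hasDerivAt_pow 2 s).mul_const (H ^ 2)).div_const 8)).congr_deriv ?_
    norm_num
    ring
  have hg_anti : AntitoneOn g (Set.Ici 0) := by
    refine antitoneOn_of_hasDerivWithinAt_nonpos (convex_Ici 0)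
      (HasDerivAt.continuousOn fun s _ => hg s) (fun s _ => (hg s).hasDerivWithinAt) ?_
    intro s hs
    rw [interior_Ici] at hs
    linarith [(abs_le.1 (abs_sum_gibbs_add_smul_mul_sub_le hδ hδ hs.le L)).1]
  have hg_le := hg_anti Set.self_mem_Ici hη hη
  simp only [g, zero_smul, add_zero, zero_mul, sub_zero, ne_eq, OfNat.ofNat_ne_zero,
    not_false_eq_true, zero_pow, zero_div] at hg_le
  linarith

lemma abs_sum_gibbs_add_smul_sum_mul_sub_le [Nonempty ι] {κ : Type*} {l : κ → ι → ℝ}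
    {x : ι → ℝ} {H η : ℝ} (hη : 0 ≤ η) (E : Finset κ)
    (hl : ∀ τ ∈ E, ∀ i, l τ i ∈ Set.Icc 0 H) (hx : ∀ i, x i ∈ Set.Icc 0 H) (L : ι → ℝ) :
    |∑ i, gibbs (L + η • ∑ τ ∈ E, l τ) i * x i - ∑ i, gibbs L i * x i|
      ≤ #E * (η * (H ^ 2 / 4)) := by
  classical
  induction E using Finset.induction_on with
  | empty => simp
  | insert a E ha ih =>
    have hstep := abs_sum_gibbs_add_smul_mul_sub_le (hl a (mem_insert_self a E)) hx hη
      (L + η • ∑ τ ∈ E, l τ)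
    have hrest := ih fun τ hτ => hl τ (mem_insert_of_mem hτ)
    rw [sum_insert ha, smul_add, add_comm (η • l a), ← add_assoc, card_insert_of_notMem ha]
    push_cast
    linarith [abs_sub_le (∑ i, gibbs (L + η • ∑ τ ∈ E, l τ + η • l a) i * x i)
      (∑ i, gibbs (L + η • ∑ τ ∈ E, l τ) i * x i) (∑ i, gibbs L i * x i)]

lemma neg_le_logPartition (L : ι → ℝ) (i : ι) : -L i ≤ logPartition L := by
  have hle : exp (-L i) ≤ ∑ j, exp (-L j) :=
    single_le_sum (f := fun j => exp (-L j)) (fun j _ => (exp_pos _).le) (mem_univ i)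
  simpa [logPartition] using log_le_log (exp_pos _) hle

lemma logPartition_zero : logPartition (0 : ι → ℝ) = log (Fintype.card ι) := by
  simp [logPartition]

lemma hedge_round_loss_le [Nonempty ι] {κ : Type*} [DecidableEq κ] {l : κ → ι → ℝ}
    {x : ι → ℝ} {H η : ℝ} (hη : 0 < η) {S P : Finset κ} (hSP : S ⊆ P)
    (hl : ∀ τ ∈ P \ S, ∀ i, l τ i ∈ Set.Icc 0 H)
    (hx : ∀ i, x i ∈ Set.Icc 0 H) :
    ∑ i, gibbs (η • ∑ τ ∈ S, l τ) i * x i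
      ≤ (logPartition (η • ∑ τ ∈ P, l τ) - logPartition (η • ∑ τ ∈ P, l τ + η • x)) / η
        + η * H ^ 2 / 8 + #(P \ S) * (η * (H ^ 2 / 4)) := by
  have hpending :=
    abs_sum_gibbs_add_smul_sum_mul_sub_le hη.le (P \ S) hl hx (η • ∑ τ ∈ S, l τ)
  rw [← smul_add, add_comm, sum_sdiff hSP] at hpending
  have hhoeffding := logPartition_add_smul_le hx hη.le (η • ∑ τ ∈ P, l τ)
  have hround : ∑ i, gibbs (η • ∑ τ ∈ P, l τ) i * x i
      ≤ (logPartition (η • ∑ τ ∈ P, l τ) - logPartition (η • ∑ τ ∈ P, l τ + η • x)) / η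
        + η * H ^ 2 / 8 := by
    rw [div_add' _ _ _ hη.ne', le_div_iff₀ hη]
    linarith
  linarith [(abs_le.1 hpending).1]

lemma sum_card_pending_le (T : ℕ) (D : ℕ → ℕ) :
    ∑ t ∈ Icc 1 T, #(Icc 1 (t - 1) \ {τ ∈ Icc 1 T | τ + D τ ≤ t - 1})
      ≤ ∑ τ ∈ Icc 1 T, D τ := by
  let pending (t τ : ℕ) : Prop := τ ≤ t - 1 ∧ t - 1 < τ + D τ
  calc ∑ t ∈ Icc 1 T, #(Icc 1 (t - 1) \ {τ ∈ Icc 1 T | τ + D τ ≤ t - 1})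
      = ∑ t ∈ Icc 1 T, #((Icc 1 T).bipartiteAbove pending t) := by
        refine sum_congr rfl fun t ht => congrArg card ?_
        ext τ
        simp only [mem_Icc] at ht
        simp only [pending, mem_sdiff, mem_filter, mem_Icc, mem_bipartiteAbove]
        omega
    _ = ∑ τ ∈ Icc 1 T, #((Icc 1 T).bipartiteBelow pending τ) :=
        sum_card_bipartiteAbove_eq_sum_card_bipartiteBelow pending
    _ ≤ ∑ τ ∈ Icc 1 T, D τ := by
        refine sum_le_sum fun τ _ => ?_
        calc #((Icc 1 T).bipartiteBelow pending τ) ≤ #(Icc (τ + 1) (τ + D τ)) := by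
              refine card_le_card fun t ht => ?_
              simp only [pending, mem_bipartiteBelow, mem_Icc] at ht ⊢
              omega
          _ = D τ := by simp

lemma delayed_hedge_regret_le [Nonempty ι] {l : ℕ → ι → ℝ} {T : ℕ} {H η : ℝ} (hη : 0 < η)
    (hl : ∀ t ∈ Icc 1 T, ∀ i, l t i ∈ Set.Icc 0 H) {S : ℕ → Finset ℕ}
    (hS : ∀ t ∈ Icc 1 T, S t ⊆ Icc 1 (t - 1)) (i : ι) :
    ∑ t ∈ Icc 1 T, ∑ j, gibbs (η • ∑ τ ∈ S t, l τ) j * l t j - ∑ t ∈ Icc 1 T, l t i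
      ≤ log (Fintype.card ι) / η + η * H ^ 2 * T / 8
        + η * H ^ 2 / 4 * ∑ t ∈ Icc 1 T, (#(Icc 1 (t - 1) \ S t) : ℝ) := by
  set Φ : ℕ → ℝ := fun t => logPartition (η • ∑ τ ∈ Icc 1 t, l τ)
  have hround : ∀ t ∈ Icc 1 T, ∑ j, gibbs (η • ∑ τ ∈ S t, l τ) j * l t j
      ≤ (Φ (t - 1) - Φ t) / η + η * H ^ 2 / 8
        + #(Icc 1 (t - 1) \ S t) * (η * (H ^ 2 / 4)) := by
    intro t ht
    have hpending : ∀ τ ∈ Icc 1 (t - 1) \ S t, ∀ j, l τ j ∈ Set.Icc 0 H := by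
      intro τ hτ
      simp only [mem_sdiff, mem_Icc] at hτ ht
      exact hl τ (mem_Icc.2 (by omega))
    have hΦt : Φ t = logPartition (η • ∑ τ ∈ Icc 1 (t - 1), l τ + η • l t) := by
      obtain ⟨s, rfl⟩ : ∃ s, t = s + 1 := ⟨t - 1, by rw [mem_Icc] at ht; omega⟩
      simp [Φ, ← smul_add, sum_Icc_succ_top]
    rw [hΦt]
    exact hedge_round_loss_le hη (hS t ht) hpending (hl t ht)
  have htelescope : ∑ t ∈ Icc 1 T, (Φ (t - 1) - Φ t) = Φ 0 - Φ T := by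
    rw [← Ico_add_one_right_eq_Icc, sum_Ico_eq_sum_range]
    simpa [add_comm] using sum_range_sub' Φ T
  have hΦ0 : Φ 0 = log (Fintype.card ι) := by simp [Φ, logPartition_zero]
  have hΦT : -(η * ∑ t ∈ Icc 1 T, l t i) ≤ Φ T := by
    simpa [Finset.sum_apply] using neg_le_logPartition (η • ∑ τ ∈ Icc 1 T, l τ) i
  have hpotential : (Φ 0 - Φ T) / η ≤ log (Fintype.card ι) / η + ∑ t ∈ Icc 1 T, l t i := by
    rw [← mul_div_cancel_left₀ (∑ t ∈ Icc 1 T, l t i) hη.ne', ← add_div, hΦ0]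
    gcongr
    linarith
  have hsum := sum_le_sum hround
  rw [sum_add_distrib, sum_add_distrib, ← sum_div, htelescope, sum_const, Nat.card_Icc,
    ← sum_mul, Nat.add_sub_cancel, nsmul_eq_mul] at hsum
  linarith

theorem stmt_14_general (N T : ℕ) (η H : ℝ)
    (hη : 0 < η) (l : ℕ → Fin N → ℝ)
    (hl : ∀ t ∈ Finset.Icc 1 T, ∀ n, l t n ∈ Set.Icc (0 : ℝ) H)
    (D : ℕ → ℕ)
    (𝒟 : ℕ → Finset ℕ)
    (h𝒟 : ∀ t, 𝒟 t = (Finset.Icc 1 T).filter (fun τ => τ + D τ ≤ t))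
    (w : ℕ → Fin N → ℝ)
    (hw : ∀ t n, w t n =
      Real.exp (-η * ∑ τ ∈ 𝒟 (t - 1), l τ n) /
        ∑ n', Real.exp (-η * ∑ τ ∈ 𝒟 (t - 1), l τ n')) :
    ∀ n, (∑ t ∈ Finset.Icc 1 T, ∑ n', w t n' * l t n')
        - ∑ t ∈ Finset.Icc 1 T, l t n
      ≤ Real.log N / η + η * H ^ 2 * T / 8
        + η * H ^ 2 / 4 * ∑ t ∈ Finset.Icc 1 T, (D t : ℝ) := by
  intro n
  have : Nonempty (Fin N) := ⟨n⟩
  have hw_gibbs : ∀ t, w t = gibbs (η • ∑ τ ∈ 𝒟 (t - 1), l τ) := fun t => funext fun n' => by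
    simp [hw, gibbs, Finset.sum_apply]
  have hdelivered : ∀ t ∈ Icc 1 T, 𝒟 (t - 1) ⊆ Icc 1 (t - 1) := by
    intro t _ τ
    simp only [h𝒟, mem_filter, mem_Icc]
    omega
  have hpending :
      ∑ t ∈ Icc 1 T, (#(Icc 1 (t - 1) \ 𝒟 (t - 1)) : ℝ) ≤ ∑ t ∈ Icc 1 T, (D t : ℝ) := by
    simp only [h𝒟]
    exact_mod_cast sum_card_pending_le T D
  have hregret := delayed_hedge_regret_le hη hl hdelivered n
  rw [Fintype.card_fin] at hregret
  simp only [hw_gibbs]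
  linarith [mul_le_mul_of_nonneg_left hpending (by positivity : 0 ≤ η * H ^ 2 / 4)]

/-- Regret bound for delayed Hedge with uniform prior: for every expert `n`,
`Σ_t ⟨w_t, l_t⟩ - Σ_t l_t(n) ≤ (ln N)/η + η H² T/8 + (η H²/4) Σ_t D t`. -/
theorem stmt_14 (N T : ℕ) (hN : 1 ≤ N) (hT : 1 ≤ T) (η H : ℝ)
    (hη : 0 < η) (hH : 0 < H) (l : ℕ → Fin N → ℝ)
    (hl : ∀ t ∈ Finset.Icc 1 T, ∀ n, l t n ∈ Set.Icc (0 : ℝ) H)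
    (D : ℕ → ℕ) (hD : ∀ t ∈ Finset.Icc 1 T, t + D t ≤ T)
    (𝒟 : ℕ → Finset ℕ)
    (h𝒟 : ∀ t, 𝒟 t = (Finset.Icc 1 T).filter (fun τ => τ + D τ ≤ t))
    (w : ℕ → Fin N → ℝ)
    (hw : ∀ t n, w t n =
      Real.exp (-η * ∑ τ ∈ 𝒟 (t - 1), l τ n) /
        ∑ n', Real.exp (-η * ∑ τ ∈ 𝒟 (t - 1), l τ n')) :
    ∀ n, (∑ t ∈ Finset.Icc 1 T, ∑ n', w t n' * l t n')
        - ∑ t ∈ Finset.Icc 1 T, l t n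
      ≤ Real.log N / η + η * H ^ 2 * T / 8
        + η * H ^ 2 / 4 * ∑ t ∈ Finset.Icc 1 T, (D t : ℝ) :=
  stmt_14_general N T η H hη l hl D 𝒟 h𝒟 w hw
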